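/- Let μ > 0 be real and suppose a sequence of a votes for A and b votes for B has all weighted partial sums S'_r = a_r - μ·b_r nonnegative, with a ≥ μb. Then there exist at least ⌊a - μb + 1⌋ indices r such that S'_r ≤ S'_t for all t with r+1 ≤ t ≤ a+b. -/

import Mathlib

/-- Number of A-votes (true) among the first `r` positions. -/
def countA (n : ℕ) (v : Fin n → Bool) (r : ℕ) : ℕ :=
  (Finset.univ.filter (fun i : Fin n => i.val < r ∧ v i = true)).card

/-- Number of B-votes (false) among the first `r` positions. -/
def countB (n : ℕ) (v : Fin n → Bool) (r : ℕ) : ℕ :=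
  (Finset.univ.filter (fun i : Fin n => i.val < r ∧ v i = false)).card

/-- Cyclic permutation moving the first `i` votes to the end. -/
def cyc {n : ℕ} (v : Fin n → Bool) (i : ℕ) : Fin n → Bool :=
  fun j => v ⟨(j.val + i) % n, Nat.mod_lt _ (Nat.lt_of_le_of_lt (Nat.zero_le j.val) j.isLt)⟩

/-!
Write `S r = a_r - μ b_r` and `m r = min_{r ≤ t ≤ N} S t`. A vote raises `S` by at most one, so
`m` rises by at most one per step, and it can only rise from `r` to `r + 1` when `S r = m r`, i.e.
when `r` is a suffix minimum. Hence `[q, N]` contains at least `⌈S N - m q⌉ + 1` suffix minima,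
counting `N` itself.

Let `q` be the first index with `S q < q`; it exists because some vote goes to `B`. Before `q`
every vote goes to `A`, so `S u = u` for `u < q`, and each `1 ≤ u ≤ m q` is a suffix minimum too.
These `⌊m q⌋₊` further indices give the bound, as `⌊m q⌋ + ⌈S N - m q⌉ ≥ ⌊S N⌋`.
-/

open Finset

theorem Int.floor_le_floor_add_ceil_sub {R : Type*} [CommRing R] [LinearOrder R]
    [IsStrictOrderedRing R] [FloorRing R] (x y : R) : ⌊x⌋ ≤ ⌊y⌋ + ⌈x - y⌉ := by
  rw [← sub_le_iff_le_add', Int.le_ceil_iff]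
  push_cast
  linarith [Int.floor_le x, Int.lt_floor_add_one y]

section SuffixMinima

variable (S : ℕ → ℝ) (N : ℕ)

open Classical in
noncomputable def suffixMinima (lo : ℕ) : Finset ℕ :=
  (Icc lo N).filter (fun r => ∀ t, r + 1 ≤ t → t ≤ N → S r ≤ S t)

variable {S N}

theorem ceil_add_one_le_card_suffixMinima (hstep : ∀ r < N, S (r + 1) ≤ S r + 1)
    {lo t : ℕ} (hlo : lo ≤ t) (htN : t ≤ N) :
    ⌈S N - S t⌉ + 1 ≤ #(suffixMinima S N lo) := by
  induction hlo.trans htN using Nat.decreasingInduction generalizing t with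
  | self =>
    obtain rfl := le_antisymm htN hlo
    rw [sub_self, Int.ceil_zero, zero_add]
    exact_mod_cast card_pos.mpr ⟨t, by simp [suffixMinima]; omega⟩
  | of_succ k hk IH =>
    classical
    rw [suffixMinima, ← insert_Icc_add_one_left_eq_Icc hk.le, filter_insert, ← suffixMinima]
    split_ifs with hgood
    · have hS : S (k + 1) ≤ S t + 1 := by
        rcases hlo.eq_or_lt with rfl | hkt
        · exact hstep k hk
        · linarith [hstep k hk, hgood t hkt htN]
      have hceil : ⌈S N - S t⌉ ≤ ⌈S N - S (k + 1)⌉ + 1 := by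
        rw [← Int.ceil_add_one]; exact Int.ceil_le_ceil (by linarith)
      rw [card_insert_of_notMem (by simp [suffixMinima]), Nat.cast_add_one]
      linarith [IH le_rfl hk]
    · rcases hlo.eq_or_lt with rfl | hkt
      · push Not at hgood
        obtain ⟨t', hkt', ht'N, hlt⟩ := hgood
        exact (add_le_add_left (Int.ceil_le_ceil (by linarith)) 1).trans (IH hkt' ht'N)
      · exact IH hkt htN

theorem exists_first_lt_self (h0 : S 0 = 0) (hstep : ∀ r < N, S (r + 1) ≤ S r + 1)
    (hN : S N < N) : ∃ q, 0 < q ∧ q ≤ N ∧ S q < q ∧ ∀ u < q, S u = u := by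
  classical
  have hex : ∃ u, S u ≠ u := ⟨N, hN.ne⟩
  obtain ⟨q, hSq, hprefix⟩ : ∃ q, S q ≠ q ∧ ∀ u < q, S u = u :=
    ⟨Nat.find hex, Nat.find_spec hex, fun u hu => not_not.mp (Nat.find_min hex hu)⟩
  have hqN : q ≤ N := le_of_not_gt fun h => hN.ne (hprefix N h)
  obtain ⟨p, rfl⟩ : ∃ p, q = p + 1 := Nat.exists_eq_add_one.mpr <|
    Nat.pos_of_ne_zero <| by rintro rfl; exact hSq (by simp [h0])
  refine ⟨p + 1, p.succ_pos, hqN, lt_of_le_of_ne ?_ hSq, hprefix⟩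
  have hstep' := hstep p (by omega)
  rw [hprefix p p.lt_succ_self] at hstep'
  push_cast
  exact hstep'

theorem floor_add_one_le_card_suffixMinima (h0 : S 0 = 0)
    (hstep : ∀ r < N, S (r + 1) ≤ S r + 1) (hN : S N < N) :
    ⌊S N⌋ + 1 ≤ #(suffixMinima S N 1) := by
  obtain ⟨q, hq0, hqN, hSq, hprefix⟩ := exists_first_lt_self h0 hstep hN
  obtain ⟨t₀, ht₀, hmin⟩ := (Icc q N).exists_min_image S ⟨q, by simp [hqN]⟩
  have hfloor_lt : ⌊S t₀⌋₊ < q :=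
    (Nat.floor_lt' hq0.ne').mpr ((hmin q (by simp [hqN])).trans_lt hSq)
  have hprefix_sub : Icc 1 ⌊S t₀⌋₊ ⊆ suffixMinima S N 1 := by
    intro u hu
    rw [mem_Icc] at hu
    have huS : (u : ℝ) ≤ S t₀ := (Nat.le_floor_iff' (by omega)).mp hu.2
    simp only [suffixMinima, mem_filter, mem_Icc]
    refine ⟨⟨hu.1, by omega⟩, fun t hut htN => ?_⟩
    rw [hprefix u (by omega)]
    rcases lt_or_ge t q with htq | hqt
    · rw [hprefix t htq]; exact_mod_cast (by omega : u ≤ t)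
    · exact huS.trans (hmin t (mem_Icc.mpr ⟨hqt, htN⟩))
  have hsuffix_sub : suffixMinima S N q ⊆ suffixMinima S N 1 :=
    filter_subset_filter _ (Icc_subset_Icc_left hq0)
  have hdisj : Disjoint (Icc 1 ⌊S t₀⌋₊) (suffixMinima S N q) := by
    refine disjoint_left.mpr fun u hu hu' => ?_
    simp only [suffixMinima, mem_filter, mem_Icc] at hu hu'
    omega
  have hcount : (⌊S t₀⌋₊ : ℤ) + (⌈S N - S t₀⌉ + 1) ≤ #(suffixMinima S N 1) := by
    have := card_le_card (union_subset hprefix_sub hsuffix_sub)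
    rw [card_union_of_disjoint hdisj, Nat.card_Icc] at this
    have hsuffix := ceil_add_one_le_card_suffixMinima hstep (mem_Icc.mp ht₀).1 (mem_Icc.mp ht₀).2
    omega
  have hfloor : ⌊S t₀⌋ ≤ ⌊S t₀⌋₊ := Int.floor_toNat (S t₀) ▸ Int.self_le_toNat _
  have hsplit := Int.floor_le_floor_add_ceil_sub (S N) (S t₀)
  omega

end SuffixMinima

section Votes

variable {n : ℕ} (v : Fin n → Bool)

theorem countA_succ_le (r : ℕ) : countA n v (r + 1) ≤ countA n v r + 1 := by
  classical
  have hsub : univ.filter (fun i : Fin n => i.val < r + 1 ∧ v i = true) ⊆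
      univ.filter (fun i : Fin n => i.val < r ∧ v i = true) ∪ univ.filter (fun i => i.val = r) := by
    intro i hi
    simp only [mem_filter, mem_univ, true_and, mem_union] at hi ⊢
    rcases Nat.lt_succ_iff_lt_or_eq.mp hi.1 with h | h
    · exact .inl ⟨h, hi.2⟩
    · exact .inr h
  have hone : #(univ.filter fun i : Fin n => i.val = r) ≤ 1 :=
    card_le_one.mpr fun i hi j hj => Fin.ext (by simp_all)
  unfold countA
  exact (card_le_card hsub).trans ((card_union_le _ _).trans (by omega))

theorem countB_mono : Monotone (countB n v) := fun _ _ hrs =>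
  card_le_card fun i hi => by
    simp only [mem_filter, mem_univ, true_and] at hi ⊢
    exact ⟨by omega, hi.2⟩

theorem countA_add_countB_self : countA n v n + countB n v n = n := by
  have := card_filter_add_card_filter_not (s := univ) (fun i : Fin n => v i = true)
  simpa [countA, countB] using this

def margin (μ : ℝ) (r : ℕ) : ℝ := countA n v r - μ * countB n v r

theorem margin_zero (μ : ℝ) : margin v μ 0 = 0 := by simp [margin, countA, countB]

theorem margin_succ_le {μ : ℝ} (hμ : 0 ≤ μ) (r : ℕ) :
    margin v μ (r + 1) ≤ margin v μ r + 1 := by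
  have hA : (countA n v (r + 1) : ℝ) ≤ countA n v r + 1 := by exact_mod_cast countA_succ_le v r
  have hB : (countB n v r : ℝ) ≤ countB n v (r + 1) := by exact_mod_cast countB_mono v r.le_succ
  have hμB := mul_le_mul_of_nonneg_left hB hμ
  unfold margin
  linarith

end Votes

open Classical in
theorem count_cute_indices_general (μ : ℝ) (a b : ℕ) (hμ : 0 < μ) (hb : 0 < b)
    (v : Fin (a + b) → Bool) (hA : countA (a + b) v (a + b) = a) :
    (⌊(a : ℝ) - μ * b + 1⌋ : ℤ) ≤
      ((Finset.Icc 1 (a + b)).filter (fun r =>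
        ∀ t, r + 1 ≤ t → t ≤ a + b →
          (countA (a + b) v r : ℝ) - μ * (countB (a + b) v r : ℝ) ≤
            (countA (a + b) v t : ℝ) - μ * (countB (a + b) v t : ℝ))).card := by
  have hB : countB (a + b) v (a + b) = b := by
    have := countA_add_countB_self v
    omega
  have hN : margin v μ (a + b) = a - μ * b := by simp [margin, hA, hB]
  have hdrop : margin v μ (a + b) < (a + b : ℕ) := by
    have hμb : 0 < μ * b := mul_pos hμ (Nat.cast_pos.mpr hb)
    rw [hN]; push_cast
    linarith
  rw [Int.floor_add_one, ← hN]
  exact floor_add_one_le_card_suffixMinima (margin_zero v μ)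
    (fun r _ => margin_succ_le v hμ.le r) hdrop

open Classical in
theorem count_cute_indices (μ : ℝ) (a b : ℕ) (hμ : 0 < μ) (ha : 0 < a) (hb : 0 < b)
    (hab : μ * b ≤ a)
    (v : Fin (a + b) → Bool) (hA : countA (a + b) v (a + b) = a)
    (hcute : ∀ r, r ≤ a + b →
      0 ≤ (countA (a + b) v r : ℝ) - μ * (countB (a + b) v r : ℝ)) :
    (⌊(a : ℝ) - μ * b + 1⌋ : ℤ) ≤
      ((Finset.Icc 1 (a + b)).filter (fun r =>
        ∀ t, r + 1 ≤ t → t ≤ a + b →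
          (countA (a + b) v r : ℝ) - μ * (countB (a + b) v r : ℝ) ≤
            (countA (a + b) v t : ℝ) - μ * (countB (a + b) v t : ℝ))).card :=
  count_cute_indices_general μ a b hμ hb v hA
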